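/- arXiv:1712.05988 — 2 statements merged into one kernel-verified Lean document; each statement's English description precedes it below -/
import Mathlib

section
/- (Specialization of an orbit of amphidrome annuli) Suppose k is odd, and suppose there are s ∈ ℝ and a homeomorphism η₀ : A → A such that η₀^{−1} ∘ (φ_{k−1} ∘ ⋯ ∘ φ₁ ∘ φ₀) ∘ η₀ = 𝒟̃_{−s}. Then there exist homeomorphisms η_j : A → A for j ∈ ℤ/kℤ, with η₀ the given one, such that η_{j+1}^{−1} ∘ φ_j ∘ η_j = 𝒟̃_{−s/k} for every j ∈ ℤ/kℤ. -/
noncomputable section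

/-- The standard annulus `A = (ℝ/ℤ) × [0,1]`. -/
abbrev Annulus : Type := AddCircle (1 : ℝ) × unitInterval

/-- `𝒟_{s,c} : A → A`, `(x,t) ↦ (x + s t + c, t)`. -/
def Dmap (s c : ℝ) : Annulus → Annulus :=
  fun p => (p.1 + ((s * (p.2 : ℝ) + c : ℝ) : AddCircle (1 : ℝ)), p.2)

/-- The piecewise twisting profile: `3s(t - 1/3) + c` for `t ≤ 1/3`, `c` for
`1/3 ≤ t ≤ 2/3`, and `3s(t - 2/3) + c` for `t ≥ 2/3`. -/
def twistProfile (s c t : ℝ) : ℝ :=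
  if t ≤ 1 / 3 then 3 * s * (t - 1 / 3) + c
  else if t ≤ 2 / 3 then c
  else 3 * s * (t - 2 / 3) + c

/-- `𝒟^p_{s,c} : A → A`, `(x,t) ↦ (x + twistProfile s c t, t)`. -/
def Dpmap (s c : ℝ) : Annulus → Annulus :=
  fun p => (p.1 + ((twistProfile s c (p.2 : ℝ) : ℝ) : AddCircle (1 : ℝ)), p.2)

/-- `𝒟̃_s : A → A`, `(x,t) ↦ (-x - twistProfile s 0 t, 1 - t)`. -/
def Dtmap (s : ℝ) : Annulus → Annulus :=
  fun p => (-p.1 - ((twistProfile s 0 (p.2 : ℝ) : ℝ) : AddCircle (1 : ℝ)),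
    unitInterval.symm p.2)

/-- `orbitComp φj j n = φ_{j+n-1} ∘ ⋯ ∘ φ_{j+1} ∘ φ_j` (applied right to left). -/
def orbitComp {k : ℕ} (φj : ZMod k → (Annulus ≃ₜ Annulus)) (j : ZMod k) :
    ℕ → (Annulus ≃ₜ Annulus)
  | 0 => Homeomorph.refl Annulus
  | n + 1 => (orbitComp φj j n).trans (φj (j + (n : ZMod k)))

lemma twist_add (a b t : ℝ) :
    twistProfile a 0 t + twistProfile b 0 t = twistProfile (a + b) 0 t := by
  unfold twistProfile; split_ifs <;> ring

lemma twist_zero (t : ℝ) : twistProfile 0 0 t = 0 := by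
  unfold twistProfile; split_ifs <;> ring

lemma twist_symm (s t : ℝ) :
    twistProfile s 0 (1 - t) = -(twistProfile s 0 t) := by
  unfold twistProfile
  split_ifs <;> try ring
  all_goals try linarith
  all_goals first
    | (have ht : t = 1/3 := by linarith
       rw [ht]; ring)
    | (have ht : t = 2/3 := by linarith
       rw [ht]; ring)

lemma twist_eq (s t : ℝ) :
    twistProfile s 0 t = 3 * s * (min (t - 1/3) 0 + max (t - 2/3) 0) := by
  unfold twistProfile
  split_ifs with h1 h2
  · rw [min_eq_left (by linarith), max_eq_right (by linarith)]; ring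
  · rw [min_eq_right (by linarith), max_eq_right (by linarith)]; ring
  · rw [min_eq_right (by linarith), max_eq_left (by linarith)]; ring

lemma twist_cont (s : ℝ) : Continuous fun t : ℝ => twistProfile s 0 t := by
  have h : (fun t : ℝ => twistProfile s 0 t)
      = fun t : ℝ => 3 * s * (min (t - 1/3) 0 + max (t - 2/3) 0) :=
    funext fun t => twist_eq s t
  rw [h]; fun_prop

lemma Dtmap_continuous (σ : ℝ) : Continuous (Dtmap σ) := by
  unfold Dtmap
  refine Continuous.prodMk (Continuous.sub continuous_fst.neg ?_)
    (unitInterval.continuous_symm.comp continuous_snd)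
  exact (AddCircle.continuous_mk' 1).comp
    (((twist_cont σ).comp continuous_subtype_val).comp continuous_snd)

lemma Dt_Dt (a b : ℝ) (p : Annulus) :
    Dtmap a (Dtmap b p) =
      (p.1 + ((twistProfile (a + b) 0 (p.2 : ℝ) : ℝ) : AddCircle (1 : ℝ)), p.2) := by
  unfold Dtmap
  refine Prod.ext ?_ (unitInterval.symm_symm p.2)
  show -(-p.1 - _) - ((twistProfile a 0 ((unitInterval.symm p.2 : ℝ)) : ℝ) : AddCircle (1:ℝ)) = _
  rw [unitInterval.coe_symm_eq, twist_symm, ← twist_add a b]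
  simp only [QuotientAddGroup.mk_add, QuotientAddGroup.mk_neg]
  abel

lemma Dt_shift (σ τ : ℝ) (p : Annulus) :
    Dtmap σ (p.1 + ((twistProfile τ 0 (p.2 : ℝ) : ℝ) : AddCircle (1 : ℝ)), p.2)
      = Dtmap (σ + τ) p := by
  unfold Dtmap
  refine Prod.ext ?_ rfl
  show -(p.1 + _) - _ = _
  rw [← twist_add σ τ]
  simp only [QuotientAddGroup.mk_add, QuotientAddGroup.mk_neg]
  abel

def DtH (σ : ℝ) : Annulus ≃ₜ Annulus where
  toFun := Dtmap σ
  invFun := Dtmap (-σ)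
  left_inv p := by
    show Dtmap (-σ) (Dtmap σ p) = p
    rw [Dt_Dt, neg_add_cancel, twist_zero]
    simp
  right_inv p := by
    show Dtmap σ (Dtmap (-σ) p) = p
    rw [Dt_Dt, add_neg_cancel, twist_zero]
    simp
  continuous_toFun := Dtmap_continuous σ
  continuous_invFun := Dtmap_continuous (-σ)

@[simp] lemma DtH_apply (σ : ℝ) (a : Annulus) : DtH σ a = Dtmap σ a := rfl
@[simp] lemma DtH_symm_apply (σ : ℝ) (a : Annulus) : (DtH σ).symm a = Dtmap (-σ) a := rfl

lemma Dt_iter_even (τ : ℝ) (m : ℕ) (p : Annulus) :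
    (Dtmap τ)^[2 * m] p
      = (p.1 + ((twistProfile (2 * (m : ℝ) * τ) 0 (p.2 : ℝ) : ℝ) : AddCircle (1 : ℝ)), p.2) := by
  induction m with
  | zero => simp [twist_zero]
  | succ n ih =>
    have h2 : 2 * (n + 1) = 2 * n + 1 + 1 := by ring
    rw [h2, Function.iterate_succ_apply', Function.iterate_succ_apply', ih, Dt_shift, Dt_Dt]
    have : τ + (τ + 2 * (n : ℝ) * τ) = 2 * ((n : ℕ) + 1 : ℝ) * τ := by ring
    rw [this]
    push_cast
    ring_nf

/-- **Specialization of an orbit of amphidrome annuli.** Let `k` be odd and let `φ` be a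
homeomorphism of `X = (ℤ/kℤ) × A` with `φ(j,a) = (j+1, φ_j a)`. If
`η₀⁻¹ ∘ (φ_{k-1} ∘ ⋯ ∘ φ₀) ∘ η₀ = 𝒟̃_{-s}`, then there are homeomorphisms `η_j` of `A`
for `j ∈ ℤ/kℤ`, extending the given `η₀`, with `η_{j+1}⁻¹ ∘ φ_j ∘ η_j = 𝒟̃_{-s/k}` for
every `j`. -/
theorem orbit_specialization (k : ℕ) (hk : Odd k)
    (φ : (ZMod k × Annulus) ≃ₜ (ZMod k × Annulus))
    (φj : ZMod k → (Annulus ≃ₜ Annulus))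
    (hφ : ∀ (j : ZMod k) (a : Annulus), φ (j, a) = (j + 1, φj j a))
    (s : ℝ) (η₀ : Annulus ≃ₜ Annulus)
    (hret : ∀ a : Annulus, η₀.symm (orbitComp φj 0 k (η₀ a)) = Dtmap (-s) a) :
    ∃ η : ZMod k → (Annulus ≃ₜ Annulus), η 0 = η₀ ∧
      ∀ (j : ZMod k) (a : Annulus),
        (η (j + 1)).symm (φj j (η j a)) = Dtmap (-(s / k)) a := by
  obtain ⟨m, hm⟩ := hk
  haveI : NeZero k := ⟨by omega⟩
  set D : Annulus ≃ₜ Annulus := DtH (-(s / k)) with hD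
  set F : ℕ → (Annulus ≃ₜ Annulus) :=
    fun n => Nat.rec η₀ (fun n ηn => (D.symm.trans ηn).trans (φj (n : ZMod k))) n with hFdef
  have hFsucc : ∀ n : ℕ, F (n + 1) = (D.symm.trans (F n)).trans (φj (n : ZMod k)) :=
    fun n => rfl
  have hDsymm : ∀ a : Annulus, D.symm a = Dtmap (s / k) a := by
    intro a
    rw [hD, DtH_symm_apply, neg_neg]
  have hF : ∀ (n : ℕ) (a : Annulus),
      F n a = orbitComp φj 0 n (η₀ ((Dtmap (s / k))^[n] a)) := by
    intro n
    induction n with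
    | zero => intro a; rfl
    | succ n ih =>
      intro a
      rw [hFsucc, Homeomorph.trans_apply, Homeomorph.trans_apply, hDsymm, ih,
        Function.iterate_succ_apply]
      show _ = orbitComp φj 0 (n + 1) _
      rw [show orbitComp φj 0 (n + 1) = (orbitComp φj 0 n).trans (φj (0 + (n : ZMod k))) from rfl]
      rw [Homeomorph.trans_apply, zero_add]
  refine ⟨fun j => F j.val, by show F (0 : ZMod k).val = η₀; rw [ZMod.val_zero]; rfl, ?_⟩
  intro j a
  show (F (j + 1).val).symm (φj j (F j.val a)) = _
  have hjv : j.val < k := ZMod.val_lt j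
  have hjcast : ((j.val : ℕ) : ZMod k) = j := ZMod.natCast_zmod_val j
  by_cases hcase : j.val + 1 < k
  · have h1 : (j + 1).val = j.val + 1 := by
      have : j + 1 = ((j.val + 1 : ℕ) : ZMod k) := by
        push_cast [hjcast]
        ring
      rw [this, ZMod.val_natCast, Nat.mod_eq_of_lt hcase]
    rw [h1, hFsucc, hjcast]
    simp only [Homeomorph.symm_trans_apply, Homeomorph.symm_apply_apply, Homeomorph.symm_symm]
    rw [hD, DtH_apply]
  · have hk1 : j.val + 1 = k := by omega
    have hj1 : j + 1 = 0 := by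
      rw [← hjcast, ← Nat.cast_one, ← Nat.cast_add, hk1, ZMod.natCast_self]
    rw [hj1, ZMod.val_zero]
    show η₀.symm (φj j (F j.val a)) = _
    rw [hF]
    have hcomp : φj j (orbitComp φj 0 j.val (η₀ ((Dtmap (s / k))^[j.val] a)))
        = orbitComp φj 0 (j.val + 1) (η₀ ((Dtmap (s / k))^[j.val] a)) := by
      rw [show orbitComp φj 0 (j.val + 1)
            = (orbitComp φj 0 j.val).trans (φj (0 + (j.val : ZMod k))) from rfl]
      rw [Homeomorph.trans_apply, zero_add, hjcast]
    rw [hcomp, hk1, hret]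
    have hv : j.val = 2 * m := by omega
    rw [hv, Dt_iter_even, Dt_shift]
    have hkR : (k : ℝ) = 2 * m + 1 := by exact_mod_cast congrArg (Nat.cast : ℕ → ℝ) hm
    have hco : -s + 2 * (m : ℝ) * (s / k) = -(s / k) := by
      rw [hkR]
      have h0 : (2 * (m : ℝ) + 1) ≠ 0 := by positivity
      field_simp
      ring
    rw [hco]
end
end

section
/- (Subdivision makes the distance function a filtering function) Let G be a finite connected simple graph, let V⁰ be a nonempty set of vertices of G, and let D be the graph distance to V⁰. Let G' be the graph obtained from G by subdividing every edge {u,v} with D(u) = D(v): its vertex set is V(G) ⊔ E₀, where E₀ is the set of edges {u,v} of G with D(u) = D(v), each such edge e = {u,v} is replaced by the two edges {u,e} and {e,v}, and all other edges of G are kept. Let D' be the graph distance in G' to V⁰. Then: (i) D'(v) = D(v) for every vertex v of G; (ii) D'(e) = D(u) + 1 for every new vertex e = {u,v} ∈ E₀; and (iii) D' is a filtering function for (G', V⁰), i.e. D'(u) ≠ D'(v) for every edge {u,v} of G', and every vertex v of G' either has a neighbor v' with D'(v') < D'(v), or satisfies D'(v) = 0 and v ∈ V⁰. -/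
/-!
On the subdivided graph consider the function that is `D` on old vertices and `D u + 1` on the
vertex subdividing a level edge `{u, v}`. It changes by exactly one along every edge, so it is a
filtering function, and it vanishes on `V⁰`. Any function that vanishes on `V⁰`, grows by at
most one along edges, and satisfies the descent condition of a filtering function is the
distance to `V⁰`: descending walks bound the distance from above, and following a shortest
walk to `V⁰` bounds the function from above by the distance.
-/

noncomputable section

open SimpleGraph

/-- The graph distance of a vertex `v` to a set `S` of vertices: the minimum number of
edges of a walk from `v` to some vertex of `S`. -/
def distToSet {V : Type*} (G : SimpleGraph V) (S : Set V) (v : V) : ℕ :=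
  sInf ((fun u => G.dist v u) '' S)

/-- `L` is a filtering function for `(G, S)` if adjacent vertices have distinct values
and every vertex either has a neighbor with strictly smaller value, or has value `0` and
lies in `S`. -/
def IsFilteringFunction {V : Type*} (G : SimpleGraph V) (S : Set V) (L : V → ℕ) : Prop :=
  (∀ u v : V, G.Adj u v → L u ≠ L v) ∧
  (∀ v : V, (∃ v' : V, G.Adj v v' ∧ L v' < L v) ∨ (L v = 0 ∧ v ∈ S))

/-- The predicate on an unordered pair `e` that both of its members have the same value
of `D`. -/
def sameLevel {V : Type*} (D : V → ℕ) (e : Sym2 V) : Prop :=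
  Sym2.lift ⟨fun u v => D u = D v, fun _ _ => propext eq_comm⟩ e

/-- The set of edges of `G` whose two endpoints have the same value of `D`. -/
def levelEdges {V : Type*} (G : SimpleGraph V) (D : V → ℕ) : Type _ :=
  {e : Sym2 V // e ∈ G.edgeSet ∧ sameLevel D e}

/-- The graph obtained from `G` by subdividing every edge `{u,v}` with `D u = D v`:
each such edge `e = {u,v}` becomes a new vertex joined to `u` and to `v`, and all other
edges of `G` are kept. -/
def Subdiv {V : Type*} (G : SimpleGraph V) (D : V → ℕ) :
    SimpleGraph (V ⊕ levelEdges G D) where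
  Adj x y :=
    match x, y with
    | Sum.inl u, Sum.inl v => G.Adj u v ∧ D u ≠ D v
    | Sum.inl u, Sum.inr e => u ∈ e.val
    | Sum.inr e, Sum.inl u => u ∈ e.val
    | Sum.inr _, Sum.inr _ => False
  symm := by
    constructor
    rintro (u | e) (v | f) h
    · exact ⟨h.1.symm, h.2.symm⟩
    · exact h
    · exact h
    · exact h.elim
  loopless := by
    constructor
    rintro (u | e) h
    · exact h.2 rfl
    · exact h

section DistToSet

variable {V : Type*} {G : SimpleGraph V} {S : Set V} {f : V → ℕ}

theorem SimpleGraph.Walk.apply_le_apply_add_length (hf : ∀ u v, G.Adj u v → f u ≤ f v + 1)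
    {u v : V} (p : G.Walk u v) : f u ≤ f v + p.length := by
  induction p with
  | nil => simp
  | cons h _ ih =>
    have := hf _ _ h
    rw [Walk.length_cons]
    omega

theorem distToSet_le_dist {u : V} (hu : u ∈ S) (v : V) : distToSet G S v ≤ G.dist v u :=
  Nat.sInf_le ⟨u, hu, rfl⟩

theorem distToSet_of_mem {v : V} (hv : v ∈ S) : distToSet G S v = 0 := by
  simpa using distToSet_le_dist (G := G) hv v

theorem exists_distToSet_eq_dist (hS : S.Nonempty) (v : V) :
    ∃ u ∈ S, distToSet G S v = G.dist v u := by
  obtain ⟨u, hu, h⟩ := Nat.sInf_mem (hS.image fun u => G.dist v u)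
  exact ⟨u, hu, h.symm⟩

theorem distToSet_le_add_one_of_adj (hG : G.Preconnected) (hS : S.Nonempty) {u v : V}
    (h : G.Adj u v) : distToSet G S u ≤ distToSet G S v + 1 := by
  obtain ⟨w, hw, hvw⟩ := exists_distToSet_eq_dist hS v
  obtain ⟨p, hp⟩ := (hG v w).exists_walk_length_eq_dist
  calc distToSet G S u ≤ G.dist u w := distToSet_le_dist hw u
    _ ≤ (p.cons h).length := dist_le _
    _ = distToSet G S v + 1 := by rw [Walk.length_cons, hp, hvw]

theorem distToSet_descent (hG : G.Preconnected) (hS : S.Nonempty) (v : V) :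
    (∃ u, G.Adj v u ∧ distToSet G S u < distToSet G S v) ∨
      (distToSet G S v = 0 ∧ v ∈ S) := by
  obtain ⟨w, hw, hvw⟩ := exists_distToSet_eq_dist hS v
  obtain ⟨p, hp⟩ := (hG v w).exists_walk_length_eq_dist
  cases p with
  | nil => exact Or.inr ⟨by rw [hvw, dist_self], hw⟩
  | @cons _ u _ h q =>
    refine Or.inl ⟨u, h, ?_⟩
    calc distToSet G S u ≤ G.dist u w := distToSet_le_dist hw u
      _ ≤ q.length := dist_le q
      _ < (q.cons h).length := by rw [Walk.length_cons]; omega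
      _ = distToSet G S v := by rw [hp, hvw]

section Descent

variable (hf : ∀ v, (∃ v', G.Adj v v' ∧ f v' < f v) ∨ (f v = 0 ∧ v ∈ S))
include hf

theorem exists_walk_length_le_of_descent (v : V) :
    ∃ u ∈ S, ∃ p : G.Walk v u, p.length ≤ f v := by
  induction hn : f v using Nat.strong_induction_on generalizing v with
  | _ n ih =>
    rcases hf v with ⟨v', hadj, hlt⟩ | ⟨-, hv⟩
    · obtain ⟨u, hu, p, hp⟩ := ih (f v') (hn ▸ hlt) v' rfl
      exact ⟨u, hu, p.cons hadj, by rw [Walk.length_cons]; omega⟩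
    · exact ⟨v, hv, Walk.nil, by simp⟩

theorem distToSet_le_of_descent (v : V) : distToSet G S v ≤ f v := by
  obtain ⟨u, hu, p, hp⟩ := exists_walk_length_le_of_descent hf v
  calc distToSet G S v ≤ G.dist v u := distToSet_le_dist hu v
    _ ≤ p.length := dist_le p
    _ ≤ f v := hp

theorem distToSet_eq_of_descent (hG : G.Preconnected) (hzero : ∀ u ∈ S, f u = 0)
    (hadj : ∀ u v, G.Adj u v → f u ≤ f v + 1) : distToSet G S = f := by
  funext v
  refine le_antisymm (distToSet_le_of_descent hf v) ?_
  obtain ⟨u, hu, -⟩ := exists_walk_length_le_of_descent hf v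
  obtain ⟨w, hw, hvw⟩ := exists_distToSet_eq_dist ⟨u, hu⟩ v
  obtain ⟨p, hp⟩ := (hG v w).exists_walk_length_eq_dist
  have := p.apply_le_apply_add_length hadj
  rw [hzero w hw, hp, ← hvw] at this
  omega

end Descent

end DistToSet

namespace Subdiv

variable {V : Type*} {G : SimpleGraph V} {D : V → ℕ}

theorem reachable_inl_of_adj {u v : V} (h : G.Adj u v) :
    (Subdiv G D).Reachable (.inl u) (.inl v) := by
  by_cases huv : D u = D v
  · let e : levelEdges G D := ⟨s(u, v), h, huv⟩
    have hue : (Subdiv G D).Adj (.inl u) (.inr e) := Sym2.mem_mk_left u v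
    have hev : (Subdiv G D).Adj (.inr e) (.inl v) := Sym2.mem_mk_right u v
    exact hue.reachable.trans hev.reachable
  · exact Adj.reachable (G := Subdiv G D) ⟨h, huv⟩

theorem reachable_inl {u v : V} (h : G.Reachable u v) :
    (Subdiv G D).Reachable (.inl u) (.inl v) := by
  obtain ⟨p⟩ := h
  induction p with
  | nil => rfl
  | cons h _ ih => exact (reachable_inl_of_adj h).trans ih

theorem exists_reachable_inl (x : V ⊕ levelEdges G D) :
    ∃ v, (Subdiv G D).Reachable x (.inl v) := by
  rcases x with v | e
  · exact ⟨v, .refl _⟩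
  · exact ⟨_, Adj.reachable (G := Subdiv G D) (Sym2.out_fst_mem e.val)⟩

end Subdiv

theorem SimpleGraph.Preconnected.subdiv {V : Type*} {G : SimpleGraph V} (hG : G.Preconnected)
    (D : V → ℕ) : (Subdiv G D).Preconnected := fun x y => by
  obtain ⟨u, hxu⟩ := Subdiv.exists_reachable_inl x
  obtain ⟨v, hyv⟩ := Subdiv.exists_reachable_inl y
  exact hxu.trans ((Subdiv.reachable_inl (hG u v)).trans hyv.symm)

/-- `Sym2.sup` makes the value `D u + 1` on the vertex subdividing a level edge `{u, v}`
independent of the order of `u` and `v`. -/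
def subdivLevel {V : Type*} (G : SimpleGraph V) (D : V → ℕ) : V ⊕ levelEdges G D → ℕ :=
  Sum.elim D fun e => (e.val.map D).sup + 1

section SubdivLevel

variable {V : Type*} {G : SimpleGraph V} {D : V → ℕ}

theorem subdivLevel_inr (e : levelEdges G D) {u : V} (hu : u ∈ e.val) :
    subdivLevel G D (.inr e) = D u + 1 := by
  have hsup : ∀ z : Sym2 V, sameLevel D z → u ∈ z → (z.map D).sup = D u := by
    intro z
    induction z using Sym2.ind with
    | _ a b =>
      rintro (hlevel : D a = D b) hu
      rcases Sym2.mem_iff.mp hu with rfl | rfl <;> simp [hlevel]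
  exact congrArg (· + 1) (hsup e.val e.2.2 hu)

theorem subdivLevel_le_add_one_of_adj (hD : ∀ u v, G.Adj u v → D u ≤ D v + 1)
    {x y : V ⊕ levelEdges G D} (h : (Subdiv G D).Adj x y) :
    subdivLevel G D x ≤ subdivLevel G D y + 1 := by
  rcases x with u | e <;> rcases y with v | f
  · exact hD u v h.1
  · change D u ≤ _; rw [subdivLevel_inr f h]; omega
  · change _ ≤ D v + 1; rw [subdivLevel_inr e h]
  · exact h.elim

theorem isFilteringFunction_subdivLevel {S : Set V}
    (hD : ∀ v, (∃ u, G.Adj v u ∧ D u < D v) ∨ (D v = 0 ∧ v ∈ S)) :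
    IsFilteringFunction (Subdiv G D) (.inl '' S) (subdivLevel G D) := by
  refine ⟨?_, ?_⟩
  · rintro (u | e) (v | f) h
    · exact h.2
    · change D u ≠ _; rw [subdivLevel_inr f h]; omega
    · change _ ≠ D v; rw [subdivLevel_inr e h]; omega
    · exact h.elim
  · rintro (v | e)
    · rcases hD v with ⟨u, hadj, hlt⟩ | ⟨h0, hv⟩
      · exact Or.inl ⟨.inl u, ⟨hadj, hlt.ne'⟩, hlt⟩
      · exact Or.inr ⟨h0, v, hv, rfl⟩
    · have hu := Sym2.out_fst_mem e.val
      refine Or.inl ⟨.inl _, hu, ?_⟩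
      rw [subdivLevel_inr e hu]
      exact Nat.lt_succ_self _

end SubdivLevel

theorem subdivision_distance_filtering_general {V : Type*}
    (G : SimpleGraph V) (hG : G.Connected) (V0 : Set V) (hV0 : V0.Nonempty)
    (D : V → ℕ) (hD : D = distToSet G V0) :
    (∀ v : V, distToSet (Subdiv G D) (Sum.inl '' V0) (Sum.inl v) = D v) ∧
    (∀ e : levelEdges G D, ∀ u v : V, e.val = s(u, v) →
      distToSet (Subdiv G D) (Sum.inl '' V0) (Sum.inr e) = D u + 1) ∧
    IsFilteringFunction (Subdiv G D) (Sum.inl '' V0)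
      (distToSet (Subdiv G D) (Sum.inl '' V0)) := by
  have hdesc : ∀ v, (∃ u, G.Adj v u ∧ D u < D v) ∨ (D v = 0 ∧ v ∈ V0) :=
    hD ▸ distToSet_descent hG.preconnected hV0
  have hadj : ∀ u v, G.Adj u v → D u ≤ D v + 1 :=
    hD ▸ fun _ _ => distToSet_le_add_one_of_adj hG.preconnected hV0
  have hfilter := isFilteringFunction_subdivLevel hdesc
  have hlevel : distToSet (Subdiv G D) (.inl '' V0) = subdivLevel G D := by
    refine distToSet_eq_of_descent hfilter.2 (hG.preconnected.subdiv D) ?_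
      fun _ _ => subdivLevel_le_add_one_of_adj hadj
    rintro _ ⟨v, hv, rfl⟩
    exact hD ▸ distToSet_of_mem hv
  refine ⟨fun v => by rw [hlevel]; rfl, fun e u v he => ?_, hlevel ▸ hfilter⟩
  rw [hlevel, subdivLevel_inr e (he ▸ Sym2.mem_mk_left u v)]

/-- **Subdivision makes the distance function a filtering function.** Let `G` be a finite
connected simple graph, `V⁰` a nonempty set of vertices, and `D` the graph distance to
`V⁰`. Subdividing every edge whose endpoints have equal distance yields a graph `G'`
whose distance function `D'` to `V⁰` satisfies: `D' = D` on old vertices, `D' = D u + 1`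
on the new vertex coming from an edge `{u,v}` with `D u = D v`, and `D'` is a filtering
function for `(G', V⁰)`. -/
theorem subdivision_distance_filtering {V : Type*} [Fintype V]
    (G : SimpleGraph V) (hG : G.Connected) (V0 : Set V) (hV0 : V0.Nonempty)
    (D : V → ℕ) (hD : D = distToSet G V0) :
    (∀ v : V, distToSet (Subdiv G D) (Sum.inl '' V0) (Sum.inl v) = D v) ∧
    (∀ e : levelEdges G D, ∀ u v : V, e.val = s(u, v) →
      distToSet (Subdiv G D) (Sum.inl '' V0) (Sum.inr e) = D u + 1) ∧
    IsFilteringFunction (Subdiv G D) (Sum.inl '' V0)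
      (distToSet (Subdiv G D) (Sum.inl '' V0)) :=
  subdivision_distance_filtering_general G hG V0 hV0 D hD
end
end
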